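/- arXiv:2510.15057 — 2 statements merged into one kernel-verified Lean document; each statement's English description precedes it below -/
import Mathlib

section
/- For every α > 0 there exist a constant K > 0 and δ ∈ (0, x₀) such that for all x ∈ (0, δ) and every integer m with 2 ≤ m ≤ n(x), the inner row sum satisfies ∑_{j=2}^{m} log(1 + α · f₋^{−j}(x)) ≤ K, where f₋^{−j} denotes the j-th iterate of the inverse map f₋⁻¹. -/
open MeasureTheory Filter Set Topology

theorem stmt_12
    (ε : ℝ) (hε : 0 < ε)
    (lam : ℝ) (hlam0 : 0 < lam) (hlam1 : lam < 1)
    (fm : ℝ → ℝ) (hfm : ContDiff ℝ 2 fm) (hfmmono : StrictMono fm)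
    (hfm0 : fm 0 = 0) (hfmderiv : deriv fm 0 = lam)
    (x₀ : ℝ) (hx₀ : 0 < x₀)
    (hcontr : ∀ x ∈ Set.Ioc (0:ℝ) x₀, 0 < fm x ∧ fm x < x)
    (fminv : ℝ → ℝ) (hfminvC : ContDiff ℝ 2 fminv)
    (hli : Function.LeftInverse fminv fm) (hri : Function.RightInverse fminv fm) :
    ∀ α : ℝ, 0 < α → ∃ K > 0, ∃ δ ∈ Set.Ioo (0:ℝ) x₀,
      ∀ x ∈ Set.Ioo (0:ℝ) δ, ∀ m : ℕ, 2 ≤ m → m ≤ sInf {k : ℕ | fm^[k] x₀ < x} →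
        ∑ j ∈ Finset.Icc 2 m, Real.log (1 + α * fminv^[j] x) ≤ K := by
  intro α hα
  have hinv_mono : StrictMono fminv := by
    intro p q hpq
    refine hfmmono.lt_iff_lt.mp ?_
    rw [hri, hri]; exact hpq
  have hinv0 : fminv 0 = 0 := by have := hli 0; rwa [hfm0] at this
  have hy0 : 0 < fminv x₀ := by
    have := hinv_mono hx₀; rwa [hinv0] at this
  set a : ℕ → ℝ := fun i => fm^[i] x₀ with ha
  have ha0 : a 0 = x₀ := rfl
  have hasucc : ∀ i, a (i + 1) = fm (a i) := fun i => Function.iterate_succ_apply' fm i x₀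
  have hmem : ∀ i, 0 < a i ∧ a i ≤ x₀ := by
    intro i
    induction i with
    | zero => rw [ha0]; exact ⟨hx₀, le_refl _⟩
    | succ n ih =>
      have h2 := hcontr (a n) ⟨ih.1, ih.2⟩
      rw [hasucc]
      exact ⟨h2.1, h2.2.le.trans ih.2⟩
  have hant : Antitone a := by
    apply antitone_nat_of_succ_le
    intro n
    rw [hasucc]
    exact (hcontr (a n) ⟨(hmem n).1, (hmem n).2⟩).2.le
  have hbdd : BddBelow (Set.range a) := ⟨0, by rintro y ⟨i, rfl⟩; exact (hmem i).1.le⟩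
  have htendL : Tendsto a atTop (𝓝 (⨅ i, a i)) := tendsto_atTop_ciInf hant hbdd
  have hL0 : 0 ≤ ⨅ i, a i := le_ciInf fun i => (hmem i).1.le
  have hLx : (⨅ i, a i) ≤ x₀ := (ciInf_le hbdd 0).trans_eq ha0
  have hLzero : (⨅ i, a i) = 0 := by
    by_contra h
    have hLpos : 0 < ⨅ i, a i := lt_of_le_of_ne hL0 (Ne.symm h)
    have h1 : Tendsto (fun i => a (i + 1)) atTop (𝓝 (⨅ i, a i)) :=
      htendL.comp (tendsto_add_atTop_nat 1)
    have h2 : Tendsto (fun i => fm (a i)) atTop (𝓝 (fm (⨅ i, a i))) :=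
      (hfm.continuous.tendsto _).comp htendL
    have heq : (fun i => a (i + 1)) = fun i => fm (a i) := funext hasucc
    rw [heq] at h1
    have hfix := tendsto_nhds_unique h1 h2
    have := (hcontr _ ⟨hLpos, hLx⟩).2
    linarith [hfix ▸ this]
  rw [hLzero] at htendL
  -- derivative: contraction near 0
  set c : ℝ := (1 + lam) / 2 with hc
  have hc1 : c < 1 := by rw [hc]; linarith
  have hc0 : 0 < c := by rw [hc]; linarith
  have hlc : lam < c := by rw [hc]; linarith
  have hder : HasDerivAt fm lam 0 := by
    have hd : DifferentiableAt ℝ fm 0 := (hfm.differentiable (by norm_num)).differentiableAt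
    have := hd.hasDerivAt
    rwa [hfmderiv] at this
  have hev : ∀ᶠ y in 𝓝[≠] (0:ℝ), slope fm 0 y < c :=
    (hasDerivAt_iff_tendsto_slope.mp hder).eventually_lt_const hlc
  rw [eventually_nhdsWithin_iff, Metric.eventually_nhds_iff] at hev
  obtain ⟨η, hη0, hη⟩ := hev
  have hη2 : 0 < η / 2 := by linarith
  have hcontr2 : ∀ y : ℝ, 0 < y → y ≤ η / 2 → fm y ≤ c * y := by
    intro y hy hyη
    have hdist : dist y 0 < η := by
      rw [Real.dist_eq, sub_zero, abs_of_pos hy]; linarith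
    have hne : y ∈ ({0}ᶜ : Set ℝ) := by simp [hy.ne']
    have hs := hη hdist hne
    rw [slope_def_field, hfm0, sub_zero, sub_zero, div_lt_iff₀ hy] at hs
    exact hs.le
  obtain ⟨N, hN⟩ : ∃ N, a N ≤ η / 2 := by
    obtain ⟨N, hN⟩ := (htendL.eventually_lt_const hη2).exists
    exact ⟨N, hN.le⟩
  have hdecay : ∀ i, a (N + i) ≤ c ^ i * (η / 2) := by
    intro i
    induction i with
    | zero => simpa using hN
    | succ n ih =>
      have hle : a (N + n) ≤ η / 2 := (hant (Nat.le_add_right N n)).trans hN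
      have h1 : fm (a (N + n)) ≤ c * a (N + n) := hcontr2 _ (hmem _).1 hle
      have h2 : c * a (N + n) ≤ c * (c ^ n * (η / 2)) :=
        mul_le_mul_of_nonneg_left ih hc0.le
      calc a (N + (n + 1)) = fm (a (N + n)) := hasucc (N + n)
        _ ≤ c * (c ^ n * (η / 2)) := h1.trans h2
        _ = c ^ (n + 1) * (η / 2) := by ring
  have hgeom : ∀ n : ℕ, ∑ i ∈ Finset.range n, c ^ i ≤ 1 / (1 - c) := by
    intro n
    rw [geom_sum_eq hc1.ne n]
    have h1 : (c ^ n - 1) / (c - 1) = (1 - c ^ n) / (1 - c) := by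
      rw [div_eq_div_iff (by linarith) (by linarith)]; ring
    rw [h1]
    apply div_le_div_of_nonneg_right ?_ (by linarith)
    · nlinarith [pow_pos hc0 n]
  set T : ℝ := N * x₀ + (η / 2) / (1 - c) with hT
  have hT0 : 0 ≤ T := by
    have h1 : 0 ≤ (η / 2) / (1 - c) := div_nonneg (by linarith) (by linarith)
    have h2 : (0:ℝ) ≤ N * x₀ := by positivity
    rw [hT]; linarith
  have hheadsum : ∀ k : ℕ, k ≤ N → ∑ i ∈ Finset.range k, a i ≤ N * x₀ := by
    intro k hk
    calc ∑ i ∈ Finset.range k, a i ≤ ∑ i ∈ Finset.range N, a i :=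
          Finset.sum_le_sum_of_subset_of_nonneg
            (Finset.range_subset_range.mpr hk) (fun i _ _ => (hmem i).1.le)
      _ ≤ N * x₀ := by
          have := Finset.sum_le_card_nsmul (Finset.range N) a x₀ (fun i _ => (hmem i).2)
          simpa [nsmul_eq_mul] using this
  have hsum : ∀ k : ℕ, ∑ i ∈ Finset.range k, a i ≤ T := by
    intro k
    rcases le_or_gt k N with h | h
    · have := hheadsum k h
      have hpos : 0 ≤ (η / 2) / (1 - c) := div_nonneg (by linarith) (by linarith)
      rw [hT]; linarith
    · have hk : k = N + (k - N) := by omega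
      rw [hk, Finset.sum_range_add]
      have h1 : ∑ i ∈ Finset.range N, a i ≤ N * x₀ := hheadsum N le_rfl
      have h2 : ∑ i ∈ Finset.range (k - N), a (N + i) ≤ (η / 2) / (1 - c) := by
        calc ∑ i ∈ Finset.range (k - N), a (N + i)
            ≤ ∑ i ∈ Finset.range (k - N), c ^ i * (η / 2) :=
              Finset.sum_le_sum fun i _ => hdecay i
          _ = (∑ i ∈ Finset.range (k - N), c ^ i) * (η / 2) := by
              rw [Finset.sum_mul]
          _ ≤ (1 / (1 - c)) * (η / 2) :=
              mul_le_mul_of_nonneg_right (hgeom _) (by linarith)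
          _ = (η / 2) / (1 - c) := by ring
      rw [hT]; linarith
  -- final assembly
  refine ⟨α * (fminv x₀ + T), mul_pos hα (by linarith), x₀ / 2,
    ⟨by linarith, by linarith⟩, ?_⟩
  intro x hx m hm2 hmn
  have hx0 : 0 < x := hx.1
  have hxm : x ≤ fm^[m - 1] x₀ := by
    by_contra h
    push_neg at h
    have hmem1 : m - 1 ∈ {k : ℕ | fm^[k] x₀ < x} := h
    have := Nat.sInf_le hmem1
    omega
  have hmy : fm^[m] (fminv x₀) = fm^[m - 1] x₀ := by
    conv_lhs => rw [show m = (m - 1) + 1 by omega]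
    rw [Function.iterate_succ_apply, hri]
  have hxy : x ≤ fm^[m] (fminv x₀) := by rw [hmy]; exact hxm
  have hkey : ∀ j, 2 ≤ j → j ≤ m → fminv^[j] x ≤ fm^[m - j] (fminv x₀) := by
    intro j hj2 hjm
    have h1 : fminv^[j] x ≤ fminv^[j] (fm^[m] (fminv x₀)) :=
      (hinv_mono.monotone.iterate j) hxy
    have h2 : fminv^[j] (fm^[m] (fminv x₀)) = fm^[m - j] (fminv x₀) := by
      conv_lhs => rw [show m = j + (m - j) by omega, Function.iterate_add_apply]
      exact (hli.iterate j) _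
    exact h1.trans_eq h2
  have hinvpos : ∀ j : ℕ, 0 ≤ fminv^[j] x := by
    intro j
    have h1 : fminv^[j] 0 = 0 := Function.iterate_fixed hinv0 j
    have h2 : fminv^[j] 0 ≤ fminv^[j] x := (hinv_mono.monotone.iterate j) hx0.le
    linarith [h1 ▸ h2]
  calc ∑ j ∈ Finset.Icc 2 m, Real.log (1 + α * fminv^[j] x)
      ≤ ∑ j ∈ Finset.Icc 2 m, α * fm^[m - j] (fminv x₀) := by
        apply Finset.sum_le_sum
        intro j hj
        rw [Finset.mem_Icc] at hj
        have hp := hinvpos j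
        have h1 : Real.log (1 + α * fminv^[j] x) ≤ α * fminv^[j] x := by
          have := Real.log_le_sub_one_of_pos (show 0 < 1 + α * fminv^[j] x by nlinarith)
          linarith
        have h2 : α * fminv^[j] x ≤ α * fm^[m - j] (fminv x₀) :=
          mul_le_mul_of_nonneg_left (hkey j hj.1 hj.2) hα.le
        linarith
    _ = ∑ i ∈ Finset.range (m - 1), α * fm^[i] (fminv x₀) := by
        apply Finset.sum_nbij' (i := fun j => m - j) (j := fun i => m - i)
        · intro j hj; rw [Finset.mem_Icc] at hj; rw [Finset.mem_range]; omega
        · intro i hi; rw [Finset.mem_range] at hi; rw [Finset.mem_Icc]; omega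
        · intro j hj; rw [Finset.mem_Icc] at hj; omega
        · intro i hi; rw [Finset.mem_range] at hi; omega
        · intro j _; rfl
    _ ≤ α * (fminv x₀ + T) := by
        rw [← Finset.mul_sum]
        apply mul_le_mul_of_nonneg_left ?_ hα.le
        have hm1 : m - 1 = (m - 2) + 1 := by omega
        rw [hm1, Finset.sum_range_succ']
        have hit : ∀ i : ℕ, fm^[i + 1] (fminv x₀) = a i := by
          intro i
          rw [Function.iterate_succ_apply, hri]
        simp only [hit, Function.iterate_zero_apply]
        have := hsum (m - 2)
        linarith
end

section
/- As x → 0⁺, the stationary density satisfies the one-sided lower bound log φ(x) ≥ (1/(2 log λ)) (log x)² − (1/log λ) (log x)·log log(1/x) + O(log x): there exist C > 0 and δ ∈ (0, x₀') such that for all x ∈ (0, δ), log φ(x) ≥ (1/(2 log λ)) (log x)² − (1/log λ) (log x)·log log(1/x) − C |log x|. -/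
open MeasureTheory Filter Set Topology

set_option maxHeartbeats 1000000 in
private lemma chain_lemma' (G : ℝ → ℝ) (b r A : ℝ) (hr0 : 0 < r) (hr1 : r < 1)
    (hb : 0 < b)
    (hGpos : ∀ y, 0 < y → y ≤ A → 0 < G y)
    (hstep : ∀ y, 0 < y → y ≤ A → b * y * G (y / r) ≤ G y) :
    ∀ n : ℕ, ∀ x : ℝ, 0 < x → x ≤ A * r ^ n →
      (n : ℝ) * Real.log b + n * Real.log x + ((n : ℝ) * ((n : ℝ) - 1) / 2) * (- Real.log r)
        + Real.log (G (x / r ^ n)) ≤ Real.log (G x) := by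
  intro n
  induction n with
  | zero => intro x hx hxA; simp
  | succ n ih =>
    intro x hx hxA
    have hrn : (0:ℝ) < r ^ n := pow_pos hr0 n
    have hA0 : 0 < A := by nlinarith [pow_pos hr0 (n+1)]
    have hrpow1 : r ^ (n+1) ≤ 1 := pow_le_one₀ hr0.le hr1.le
    have hxA1 : x ≤ A := by nlinarith
    have hxr : x / r ≤ A * r ^ n := by
      rw [div_le_iff₀ hr0]
      calc x ≤ A * r ^ (n+1) := hxA
        _ = A * r ^ n * r := by ring
    have hxr0 : 0 < x / r := div_pos hx hr0
    have hGxr : 0 < G (x / r) := hGpos _ hxr0 (by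
      calc x / r ≤ A * r ^ n := hxr
        _ ≤ A := by nlinarith [pow_le_one₀ hr0.le hr1.le (n := n)])
    have h1 := hstep x hx hxA1
    have h2 := ih (x / r) hxr0 hxr
    have hlog : Real.log b + Real.log x + Real.log (G (x/r)) ≤ Real.log (G x) := by
      have hpos : 0 < b * x * G (x / r) := by positivity
      have h3 := Real.log_le_log hpos h1
      rw [Real.log_mul (by positivity) hGxr.ne', Real.log_mul hb.ne' hx.ne'] at h3
      linarith
    have hxd : x / r / r ^ n = x / r ^ (n+1) := by
      rw [div_div, ← pow_succ']
    have hlogxr : Real.log (x / r) = Real.log x - Real.log r :=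
      Real.log_div hx.ne' hr0.ne'
    rw [hxd, hlogxr] at h2
    push_cast
    nlinarith [h2, hlog]

private lemma nat_mul_sub_one_nonneg' (n : ℕ) : 0 ≤ (n:ℝ) * ((n:ℝ) - 1) := by
  rcases Nat.eq_zero_or_pos n with h | h
  · simp [h]
  · have : (1:ℝ) ≤ (n:ℝ) := by exact_mod_cast h
    nlinarith

private lemma eventually_quad_le' (l u v w : ℝ) (hl : 0 < l) :
    ∀ᶠ L : ℝ in atTop, (2/l) * (Real.log L + u) * (v + Real.log L) + w ≤ L := by
  have h1 : ∀ᶠ L : ℝ in atTop, |u| ≤ Real.log L :=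
    Real.tendsto_log_atTop.eventually_ge_atTop _
  have h2 : ∀ᶠ L : ℝ in atTop, |v| ≤ Real.log L :=
    Real.tendsto_log_atTop.eventually_ge_atTop _
  have h3 : ∀ᶠ L : ℝ in atTop, (1:ℝ) ≤ Real.log L :=
    Real.tendsto_log_atTop.eventually_ge_atTop _
  have h4 : ∀ᶠ L : ℝ in atTop, Real.log L ^ 2 / (1 * L + 0) ≤ l / 16 := by
    have := Real.tendsto_pow_log_div_mul_add_atTop 1 0 2 one_ne_zero
    exact this.eventually_le_const (by positivity)
  have h5 : ∀ᶠ L : ℝ in atTop, w ≤ L / 2 := (eventually_ge_atTop (2*w)).mono (by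
    intro L h; linarith)
  have h6 : ∀ᶠ L : ℝ in atTop, (0:ℝ) < L := eventually_gt_atTop 0
  filter_upwards [h1, h2, h3, h4, h5, h6] with L h1 h2 h3 h4 h5 h6
  have hu : u ≤ Real.log L := (le_abs_self u).trans h1
  have hv : v ≤ Real.log L := (le_abs_self v).trans h2
  have hu' : -Real.log L ≤ u := by have := neg_abs_le u; linarith
  have hv' : -Real.log L ≤ v := by have := neg_abs_le v; linarith
  have hle : (Real.log L + u) * (v + Real.log L) ≤ 4 * Real.log L ^ 2 := by nlinarith
  have h4' : Real.log L ^ 2 ≤ l / 16 * L := by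
    rw [div_le_iff₀ (by linarith)] at h4
    nlinarith
  have key : 2 * ((Real.log L + u) * (v + Real.log L)) ≤ l * (L/2) := by nlinarith
  have heq : (2/l) * (Real.log L + u) * (v + Real.log L)
      = 2 * ((Real.log L + u) * (v + Real.log L)) / l := by ring
  rw [heq]
  have : 2 * ((Real.log L + u) * (v + Real.log L)) / l ≤ L / 2 := by
    rw [div_le_iff₀ hl]; nlinarith
  linarith

private lemma eventually_log_add_le' (w : ℝ) : ∀ᶠ L : ℝ in atTop, Real.log L + w ≤ L := by
  have h4 : ∀ᶠ L : ℝ in atTop, Real.log L ^ 1 / (1 * L + 0) ≤ 1 / 2 := by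
    have := Real.tendsto_pow_log_div_mul_add_atTop 1 0 1 one_ne_zero
    exact this.eventually_le_const (by norm_num)
  have h5 : ∀ᶠ L : ℝ in atTop, w ≤ L / 2 := (eventually_ge_atTop (2*w)).mono (by
    intro L h; linarith)
  have h6 : ∀ᶠ L : ℝ in atTop, (0:ℝ) < L := eventually_gt_atTop 0
  filter_upwards [h4, h5, h6] with L h4 h5 h6
  rw [div_le_iff₀ (by linarith)] at h4
  simp only [pow_one] at h4
  linarith

set_option maxHeartbeats 1600000 in
private lemma main_calc' (l L q D ν a e : ℝ) (hl : 0 < l) (hL3 : 3 ≤ L)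
    (hlogL1 : 1 ≤ Real.log L) (hlogLL : Real.log L ≤ L)
    (hq : q = l - 2/L) (hq2 : l/2 ≤ q)
    (hν0 : 0 ≤ ν) (hνq : q*ν ≤ D) (hDL : D ≤ L) :
    -(L^2/(2*l)) - L*Real.log L/l
      - (3 + |a|/l + 4 * |a| /l^2 + 4/l^2 + 2/l^2 + |e|)*L
      ≤ ν*(a - Real.log L) + ν*(-L) + (ν*(ν-1)/2)*q + (-L) + e := by
  have hL0 : (0:ℝ) < L := by linarith
  have hq0 : (0:ℝ) < q := by linarith
  have hl2 : (0:ℝ) < l^2 := by positivity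
  have hqL : l*L - q*L = 2 := by rw [hq]; field_simp; ring
  have hνqL : q*ν ≤ L := le_trans hνq hDL
  have hLqν : 0 ≤ L - q*ν := by nlinarith
  have key1 : -(L^2) - q*L ≤ 2*q*(ν*(-L) + (ν*(ν-1)/2)*q) := by
    nlinarith [sq_nonneg (L - q*ν), mul_nonneg hq0.le hLqν]
  have key2 : L^2*l^2 ≤ q*L^2*l + 4*q*L := by
    have hid : L^2*l^2 - q*L^2*l = 2*L*l := by linear_combination (L*l)*hqL
    nlinarith [mul_pos hL0 hl]
  have keyX : -(L^2/(2*l)) - 2*L/l^2 - L/2 ≤ ν*(-L) + (ν*(ν-1)/2)*q := by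
    have h2q : (0:ℝ) < 2*q := by linarith
    rw [← mul_le_mul_iff_right₀ h2q]
    have expand : 2*q*(-(L^2/(2*l)) - 2*L/l^2 - L/2) = -(q*L^2/l) - 4*(q*L)/l^2 - q*L := by
      field_simp; ring
    rw [expand]
    have h3 : -(q*L^2/l) - 4*(q*L)/l^2 ≤ -(L^2) := by
      rw [← sub_nonneg]
      have hh : -(L^2) - (-(q*L^2/l) - 4*(q*L)/l^2) = (q*L^2*l + 4*q*L - L^2*l^2)/l^2 := by
        field_simp; ring
      rw [hh]
      apply div_nonneg _ hl2.le
      linarith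
    linarith [key1]
  have hνl2 : ν*l^2 ≤ L*l + 4 := by
    have hI : (ν*l^2)*L = l*(q*ν*L) + 2*(l*ν) := by linear_combination (l*ν)*hqL
    have hA : l*(q*ν*L) ≤ l*(L*L) := by
      have h2 : q*ν*L ≤ L*L := by nlinarith
      exact mul_le_mul_of_nonneg_left h2 hl.le
    have hB : 2*(l*ν) ≤ 4*L := by nlinarith [mul_nonneg hν0 (by linarith : (0:ℝ) ≤ 2*q - l)]
    have h4 : (ν*l^2)*L ≤ (L*l + 4)*L := by nlinarith
    exact le_of_mul_le_mul_right h4 hL0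
  have habs : 0 ≤ |a| + Real.log L := by positivity
  have hT1 : -(L*Real.log L/l) - (|a|/l + 4 * |a| /l^2 + 4/l^2)*L ≤ ν*(a - Real.log L) := by
    have hstep : ν*( |a| + Real.log L) ≤ L*Real.log L/l + (|a|/l + 4 * |a| /l^2 + 4/l^2)*L := by
      rw [← mul_le_mul_iff_left₀ hl2]
      have hrhs : (L*Real.log L/l + (|a|/l + 4 * |a| /l^2 + 4/l^2)*L)*l^2
          = L*Real.log L*l + |a| * L * l + 4 * |a| * L + 4*L := by field_simp; ring
      rw [hrhs]
      have h5 : ν*( |a| + Real.log L)*l^2 = (ν*l^2)*( |a| + Real.log L) := by ring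
      rw [h5]
      have h6 : (ν*l^2)*( |a| + Real.log L) ≤ (L*l + 4)*( |a| + Real.log L) :=
        mul_le_mul_of_nonneg_right hνl2 habs
      have h7 : (L*l + 4)*( |a| + Real.log L)
          ≤ L*Real.log L*l + |a| * L * l + 4 * |a| * L + 4*L := by
        nlinarith [abs_nonneg a]
      linarith
    have h8 : -(ν*( |a| + Real.log L)) ≤ ν*(a - Real.log L) := by
      nlinarith [neg_abs_le a, le_abs_self a]
    linarith
  have he : -( |e| * L) ≤ e := by nlinarith [neg_abs_le e, abs_nonneg e]
  ring_nf at hT1 keyX he ⊢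
  linarith [hT1, keyX, he, hL0]

private lemma anchor_calc' (l q ν cA lb lyc lm logL L : ℝ)
    (hl : 0 < l) (hq : l/2 ≤ q) (hν0 : 0 ≤ ν) (hνν : 0 ≤ ν*(ν-1))
    (hlogL : 0 ≤ logL)
    (hνq : q*ν ≤ logL + cA)
    (hE : (2/l) * (logL + |cA|) * (( |lb| + |lyc| ) + logL) + |lm| ≤ L) :
    -L ≤ ν*lb + ν*(lyc - logL) + (ν*(ν-1)/2)*q + lm := by
  have hq0 : 0 < q := by linarith
  have hP : 0 ≤ logL + |cA| := by positivity
  have hQ : 0 ≤ ( |lb| + |lyc| ) + logL := by positivity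
  have hN : ν*l ≤ 2*(logL + |cA|) := by
    have h1 : cA ≤ |cA| := le_abs_self cA
    nlinarith
  have hB : ν*(( |lb| + |lyc| ) + logL) ≤ (2/l) * (logL + |cA|) * (( |lb| + |lyc| ) + logL) := by
    have heq : (2/l) * (logL + |cA|) * (( |lb| + |lyc| ) + logL)
        = (2*(logL + |cA|)*(( |lb| + |lyc| ) + logL))/l := by ring
    rw [heq, le_div_iff₀ hl]
    calc ν*(( |lb| + |lyc| ) + logL)*l = (ν*l)*(( |lb| + |lyc| ) + logL) := by ring
      _ ≤ 2*(logL + |cA|)*(( |lb| + |lyc| ) + logL) := mul_le_mul_of_nonneg_right hN hQ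
  have h2 : -(ν*(( |lb| + |lyc| ) + logL)) ≤ ν*lb + ν*(lyc - logL) := by
    nlinarith [mul_le_mul_of_nonneg_left (neg_abs_le lb) hν0,
      mul_le_mul_of_nonneg_left (neg_abs_le lyc) hν0]
  have h3 : 0 ≤ (ν*(ν-1)/2)*q := by positivity
  have h4 : -|lm| ≤ lm := neg_abs_le lm
  linarith

set_option maxHeartbeats 4000000 in
theorem stmt_16
    (ε : ℝ) (hε : 0 < ε)
    (f g : ℝ → ℝ)
    (hf : ContDiff ℝ 2 f) (hg : ContDiff ℝ 2 g)
    (hfmono : StrictMono f)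
    (hgf : Function.LeftInverse g f) (hfg : Function.RightInverse g f)
    (fm fminv : ℝ → ℝ)
    (hfm : ∀ x, fm x = f x - ε)
    (hfminv : ∀ x, fminv x = g (x + ε))
    (hfm0 : fm 0 = 0)
    (lam : ℝ) (hlam : lam = deriv fm 0) (hlam0 : 0 < lam) (hlam1 : lam < 1)
    (p : ℝ → ℝ) (hp : ContDiffOn ℝ 1 p (Set.Icc (-ε) ε))
    (hpnn : ∀ z ∈ Set.Icc (-ε) ε, 0 ≤ p z) (hpe : 0 < p (-ε))
    (x₀' : ℝ) (hx₀' : 0 < x₀')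
    (φ : ℝ → ℝ) (hφc : Continuous φ) (hφnn : ∀ x, 0 ≤ φ x)
    (hφpos : ∀ x ∈ Set.Ioc 0 x₀', 0 < φ x)
    (hstat : ∀ x ∈ Set.Icc 0 x₀',
      φ x = (1/ε) * ∫ y in (0:ℝ)..(fminv x), p (x - f y) * φ y)
    (hderivmono : MonotoneOn (deriv fm) (Set.Icc 0 x₀') ∨
      AntitoneOn (deriv fm) (Set.Icc 0 x₀')) :
    ∃ C > 0, ∃ δ ∈ Set.Ioo (0:ℝ) x₀', ∀ x ∈ Set.Ioo (0:ℝ) δ,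
      Real.log (φ x) ≥ (1 / (2 * Real.log lam)) * (Real.log x) ^ 2
        - (1 / Real.log lam) * Real.log x * Real.log (Real.log (1/x)) - C * |Real.log x| := by
  classical
  have hloglam : Real.log lam < 0 := Real.log_neg hlam0 hlam1
  set l : ℝ := -Real.log lam with hl_def
  clear_value l
  have hl : 0 < l := by simp only [hl_def]; linarith
  have hlamlog : Real.log lam = -l := by simp [hl_def]
  -- fm basics
  have hfmSM : StrictMono fm := by
    intro a b hab
    rw [hfm a, hfm b]
    exact sub_lt_sub_right (hfmono hab) ε
  have hfmfinv : ∀ t : ℝ, fm (fminv t) = t := by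
    intro t
    rw [hfm, hfminv, hfg (t + ε)]
    ring
  have hfminv_ge : ∀ s t : ℝ, fm s ≤ t → s ≤ fminv t := by
    intro s t h
    exact (hfmSM.le_iff_le).mp (by rw [hfmfinv]; exact h)
  -- noise lower bound near -ε
  obtain ⟨η, hη0, hpc⟩ : ∃ η > 0, ∀ z : ℝ, -ε ≤ z → z ≤ -ε + η → p (-ε)/2 ≤ p z := by
    have hmem : (-ε) ∈ Set.Icc (-ε) ε := ⟨le_refl _, by linarith⟩
    have hcw : ContinuousWithinAt p (Set.Icc (-ε) ε) (-ε) :=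
      hp.continuousOn.continuousWithinAt hmem
    have hev : {z : ℝ | p (-ε)/2 < p z} ∈ nhdsWithin (-ε) (Set.Icc (-ε) ε) :=
      hcw (eventually_gt_nhds (by linarith))
    rw [Metric.mem_nhdsWithin_iff] at hev
    obtain ⟨ρ, hρ0, hsub⟩ := hev
    refine ⟨min (ρ/2) ε, by positivity, ?_⟩
    intro z h1 h2
    have hz2 : z + ε ≤ min (ρ/2) ε := by linarith
    have hzb : z ∈ Metric.ball (-ε) ρ ∩ Set.Icc (-ε) ε := by
      constructor
      · rw [Metric.mem_ball, Real.dist_eq]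
        rw [show z - (-ε) = z + ε by ring, abs_of_nonneg (by linarith)]
        have := min_le_left (ρ/2) ε
        linarith
      · refine ⟨h1, ?_⟩
        have := min_le_right (ρ/2) ε
        linarith
    exact le_of_lt (hsub hzb)
  set c : ℝ := p (-ε)/2 with hc_def
  clear_value c
  have hc : 0 < c := by rw [hc_def]; positivity
  -- Taylor bound
  obtain ⟨K₀, s₀, hK₀0, hs₀0, hs₀1, hTay⟩ :
      ∃ K₀ s₀ : ℝ, 0 ≤ K₀ ∧ 0 < s₀ ∧ s₀ ≤ 1 ∧
        ∀ t : ℝ, 0 ≤ t → t ≤ s₀ → fm t ≤ lam*t + K₀*t^2 := by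
    have hfmeq : fm = fun x => f x - ε := funext hfm
    have hfm2 : ContDiff ℝ 2 fm := by rw [hfmeq]; exact hf.sub contDiff_const
    have hfm2' : ContDiff ℝ ((1:ℕ)+1) fm := by exact_mod_cast hfm2
    have hd1 : ContDiff ℝ 1 (deriv fm) := by
      have := (contDiff_succ_iff_deriv (n := (1:ℕ))).mp (by exact_mod_cast hfm2')
      exact this.2.2
    obtain ⟨Kl, t, ht, hlip⟩ := hd1.contDiffAt.exists_lipschitzOnWith (x := (0:ℝ))
    obtain ⟨ρ, hρ0, hball⟩ := Metric.mem_nhds_iff.mp ht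
    refine ⟨Kl, min (ρ/2) 1, Kl.coe_nonneg, lt_min (by positivity) one_pos, min_le_right _ _, ?_⟩
    intro t' ht0 hts
    rcases eq_or_lt_of_le ht0 with h | h
    · rw [← h, hfm0]; norm_num
    · have hcont : ContinuousOn fm (Set.Icc 0 t') := hfm2.continuous.continuousOn
      have hdiff : DifferentiableOn ℝ fm (Set.Ioo 0 t') :=
        (hfm2.differentiable (by norm_num)).differentiableOn
      obtain ⟨ξ, hξ, hslope⟩ := exists_deriv_eq_slope fm h hcont hdiff
      have hξ0 : 0 < ξ := hξ.1
      have hξt : ξ < t' := hξ.2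
      have hρ2 : t' ≤ ρ/2 := le_trans hts (min_le_left _ _)
      have hξball : ξ ∈ Metric.ball (0:ℝ) ρ := by
        rw [Metric.mem_ball, Real.dist_eq, sub_zero, abs_of_pos hξ0]
        linarith
      have h0ball : (0:ℝ) ∈ Metric.ball (0:ℝ) ρ := Metric.mem_ball_self hρ0
      have hd := hlip.dist_le_mul ξ (hball hξball) 0 (hball h0ball)
      rw [Real.dist_eq, Real.dist_eq, sub_zero, abs_of_pos hξ0] at hd
      have hDf : deriv fm ξ ≤ lam + (Kl:ℝ) * t' := by
        have h1 : deriv fm ξ - deriv fm 0 ≤ (Kl:ℝ) * ξ := le_trans (le_abs_self _) hd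
        have h2 : (Kl:ℝ) * ξ ≤ (Kl:ℝ) * t' := mul_le_mul_of_nonneg_left hξt.le Kl.coe_nonneg
        rw [hlam]
        linarith
      have hfmt : fm t' = deriv fm ξ * t' := by
        rw [hfm0, sub_zero, sub_zero] at hslope
        rw [hslope]
        field_simp
      rw [hfmt]
      nlinarith
  -- constants
  set θ₀ : ℝ := min (l/4) (1/2) with hθ₀_def
  clear_value θ₀
  have hθ₀0 : 0 < θ₀ := by rw [hθ₀_def]; exact lt_min (by positivity) (by norm_num)
  have hθ₀l : θ₀ ≤ l/4 := by rw [hθ₀_def]; exact min_le_left _ _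
  have hθ₀1 : θ₀ ≤ 1/2 := by rw [hθ₀_def]; exact min_le_right _ _
  set M : ℝ := min x₀' (min η ε) with hM_def
  clear_value M
  have hM0 : 0 < M := by rw [hM_def]; exact lt_min hx₀' (lt_min hη0 hε)
  have hMx₀ : M ≤ x₀' := by rw [hM_def]; exact min_le_left _ _
  have hMη : M ≤ η := by rw [hM_def]; exact le_trans (min_le_right _ _) (min_le_left _ _)
  have hMε : M ≤ ε := by rw [hM_def]; exact le_trans (min_le_right _ _) (min_le_right _ _)
  set K : ℝ := max (max K₀ 1) (max (lam*θ₀/s₀) (lam^2*θ₀/M)) with hK_def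
  clear_value K
  have hK1 : (1:ℝ) ≤ K := by rw [hK_def]; exact le_trans (le_max_right _ _) (le_max_left _ _)
  have hK0 : 0 < K := by linarith
  have hKK₀ : K₀ ≤ K := by rw [hK_def]; exact le_trans (le_max_left _ _) (le_max_left _ _)
  have hKs₀ : lam*θ₀/K ≤ s₀ := by
    have h1 : lam*θ₀/s₀ ≤ K := by rw [hK_def]; exact le_trans (le_max_left _ _) (le_max_right _ _)
    rw [div_le_iff₀ hs₀0] at h1
    rw [div_le_iff₀ hK0]
    nlinarith
  have hKM : lam^2*θ₀/K ≤ M := by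
    have h1 : lam^2*θ₀/M ≤ K := by rw [hK_def]; exact le_trans (le_max_right _ _) (le_max_right _ _)
    rw [div_le_iff₀ hM0] at h1
    rw [div_le_iff₀ hK0]
    nlinarith
  set c₄ : ℝ := lam^2/K with hc₄_def
  clear_value c₄
  have hc₄0 : 0 < c₄ := by rw [hc₄_def]; positivity
  have hc₄M : c₄*θ₀ ≤ M := by
    have : c₄*θ₀ = lam^2*θ₀/K := by rw [hc₄_def]; ring
    rw [this]; exact hKM
  set c2 : ℝ := c/(2*ε) with hc2_def
  clear_value c2
  have hc20 : 0 < c2 := by rw [hc2_def]; positivity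
  -- G and its properties
  set G : ℝ → ℝ := fun s => ∫ u in (0:ℝ)..s, φ u with hG_def
  clear_value G
  have hφint : ∀ a b : ℝ, IntervalIntegrable φ volume a b := fun a b =>
    hφc.intervalIntegrable a b
  have hGmono : ∀ a b : ℝ, 0 ≤ a → a ≤ b → G a ≤ G b := by
    intro a b ha hab
    have h := intervalIntegral.integral_add_adjacent_intervals (hφint 0 a) (hφint a b)
    have h2 : 0 ≤ ∫ u in a..b, φ u := intervalIntegral.integral_nonneg hab (fun u _ => hφnn u)
    simp only [hG_def]
    rw [← h]
    linarith
  have hGnonneg : ∀ a : ℝ, 0 ≤ a → 0 ≤ G a := by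
    intro a ha
    have := hGmono 0 a le_rfl ha
    simpa [hG_def] using this
  have hGpos : ∀ s : ℝ, 0 < s → s ≤ x₀' → 0 < G s := by
    intro s hs0 hsx
    have h := intervalIntegral.integral_add_adjacent_intervals (hφint 0 (s/2)) (hφint (s/2) s)
    have h1 : 0 ≤ ∫ u in (0:ℝ)..(s/2), φ u :=
      intervalIntegral.integral_nonneg (by linarith) (fun u _ => hφnn u)
    have h2 : 0 < ∫ u in (s/2)..s, φ u := by
      apply intervalIntegral.intervalIntegral_pos_of_pos_on (hφint _ _)
      · intro u hu
        exact hφpos u ⟨by linarith [hu.1], le_of_lt (lt_of_lt_of_le hu.2 hsx)⟩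
      · linarith
    simp only [hG_def]
    rw [← h]
    linarith
  -- pointwise lower bound for φ
  have hφlb : ∀ t : ℝ, 0 < t → t ≤ M → ∀ s : ℝ, 0 ≤ s → s ≤ fminv t →
      (c/ε) * G s ≤ φ t := by
    intro t ht0 htM s hs0 hsf
    have htx₀ : t ≤ x₀' := le_trans htM hMx₀
    have htη : t ≤ η := le_trans htM hMη
    have htε : t ≤ ε := le_trans htM hMε
    have hft0 : 0 ≤ fminv t := hfminv_ge 0 t (by rw [hfm0]; exact ht0.le)
    have hfmu : ∀ u ∈ Set.Icc (0:ℝ) (fminv t), 0 ≤ fm u ∧ fm u ≤ t := by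
      intro u hu
      constructor
      · have := hfmSM.monotone hu.1
        rwa [hfm0] at this
      · have := hfmSM.monotone hu.2
        rwa [hfmfinv] at this
    have hargs : ∀ u ∈ Set.Icc (0:ℝ) (fminv t),
        -ε ≤ t - f u ∧ t - f u ≤ -ε + η ∧ t - f u ≤ ε := by
      intro u hu
      obtain ⟨h1, h2⟩ := hfmu u hu
      have hfu : f u = fm u + ε := by rw [hfm u]; ring
      exact ⟨by rw [hfu]; linarith, by rw [hfu]; linarith, by rw [hfu]; linarith⟩
    have hmaps : Set.MapsTo (fun u => t - f u) (Set.Icc 0 (fminv t)) (Set.Icc (-ε) ε) := by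
      intro u hu
      obtain ⟨h1, h2, h3⟩ := hargs u hu
      exact ⟨h1, h3⟩
    have hcont : ContinuousOn (fun u => p (t - f u) * φ u) (Set.Icc 0 (fminv t)) := by
      apply ContinuousOn.mul
      · exact hp.continuousOn.comp ((continuous_const.sub hf.continuous).continuousOn) hmaps
      · exact hφc.continuousOn
    have hint1 : IntervalIntegrable (fun u => p (t - f u) * φ u) volume 0 s := by
      apply ContinuousOn.intervalIntegrable
      apply hcont.mono
      rw [Set.uIcc_of_le hs0]
      exact Set.Icc_subset_Icc le_rfl hsf
    have hint2 : IntervalIntegrable (fun u => p (t - f u) * φ u) volume s (fminv t) := by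
      apply ContinuousOn.intervalIntegrable
      apply hcont.mono
      rw [Set.uIcc_of_le hsf]
      exact Set.Icc_subset_Icc hs0 le_rfl
    have hsplit : (∫ u in (0:ℝ)..s, p (t - f u) * φ u)
        + (∫ u in s..(fminv t), p (t - f u) * φ u)
        = ∫ u in (0:ℝ)..(fminv t), p (t - f u) * φ u :=
      intervalIntegral.integral_add_adjacent_intervals hint1 hint2
    have hnn2 : 0 ≤ ∫ u in s..(fminv t), p (t - f u) * φ u := by
      apply intervalIntegral.integral_nonneg hsf
      intro u hu
      have hu' : u ∈ Set.Icc (0:ℝ) (fminv t) := ⟨le_trans hs0 hu.1, hu.2⟩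
      exact mul_nonneg (hpnn _ (hmaps hu')) (hφnn u)
    have hlb : c * G s ≤ ∫ u in (0:ℝ)..s, p (t - f u) * φ u := by
      have h1 : (∫ u in (0:ℝ)..s, c * φ u) = c * G s := by
        simp only [hG_def]
        exact intervalIntegral.integral_const_mul c φ
      rw [← h1]
      apply intervalIntegral.integral_mono_on hs0 ((continuous_const.mul hφc).intervalIntegrable _ _) hint1
      intro u hu
      have hu' : u ∈ Set.Icc (0:ℝ) (fminv t) := ⟨hu.1, le_trans hu.2 hsf⟩
      obtain ⟨ha1, ha2, ha3⟩ := hargs u hu'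
      have hcp : c ≤ p (t - f u) := hpc _ ha1 ha2
      exact mul_le_mul_of_nonneg_right hcp (hφnn u)
    rw [hstat t ⟨ht0.le, htx₀⟩]
    have hεinv : (0:ℝ) < 1/ε := by positivity
    calc (c/ε) * G s = (1/ε) * (c * G s) := by ring
      _ ≤ (1/ε) * ∫ u in (0:ℝ)..(fminv t), p (t - f u) * φ u := by
          apply mul_le_mul_of_nonneg_left _ hεinv.le
          rw [← hsplit]
          linarith
  -- the recursion step
  have hstep : ∀ θ : ℝ, 0 < θ → θ ≤ θ₀ → ∀ y : ℝ, 0 < y → y ≤ c₄*θ →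
      (c2*θ) * y * G (y/(lam*Real.exp (2*θ))) ≤ G y := by
    intro θ hθ0 hθθ₀ y hy0 hyA
    have hθ1 : θ ≤ 1 := by linarith
    set ν : ℝ := Real.exp (-θ) with hν_def
    set μ : ℝ := lam*Real.exp θ with hμ_def
    set r : ℝ := lam*Real.exp (2*θ) with hr_def
    have hμ0 : 0 < μ := by rw [hμ_def]; positivity
    have hr0' : 0 < r := by rw [hr_def]; positivity
    have hν0 : 0 < ν := Real.exp_pos _
    have hcθM : c₄*θ ≤ M :=
      le_trans (mul_le_mul_of_nonneg_left hθθ₀ hc₄0.le) hc₄M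
    have hyr_eq : y/r = (ν*y)/μ := by
      have hee : Real.exp (-θ) * Real.exp (2*θ) = Real.exp θ := by
        rw [← Real.exp_add]; ring_nf
      rw [hν_def, hμ_def, hr_def, div_eq_div_iff (by positivity) (by positivity)]
      linear_combination (-(y*lam))*hee
    have hexpθ1 : (1:ℝ) ≤ Real.exp θ := Real.one_le_exp hθ0.le
    have hμlam : lam ≤ μ := by
      rw [hμ_def]
      calc lam = lam*1 := by ring
        _ ≤ lam*Real.exp θ := mul_le_mul_of_nonneg_left hexpθ1 hlam0.le
    have hpt : ∀ t ∈ Set.Icc (ν*y) y, (c/ε) * G (y/r) ≤ φ t := by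
      intro t ht
      have ht0 : 0 < t := lt_of_lt_of_le (by positivity) ht.1
      have htM : t ≤ M := le_trans ht.2 (le_trans hyA hcθM)
      have hsμ0 : (0:ℝ) ≤ t/μ := by positivity
      have htc₄ : t ≤ c₄*θ := le_trans ht.2 hyA
      have htμ_le : t/μ ≤ lam*θ/K := by
        rw [div_le_div_iff₀ hμ0 hK0]
        have h1 : t*K ≤ lam^2*θ := by
          have he : c₄*θ*K = lam^2*θ := by rw [hc₄_def]; field_simp
          calc t*K ≤ (c₄*θ)*K := mul_le_mul_of_nonneg_right htc₄ hK0.le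
            _ = lam^2*θ := he
        calc t*K ≤ lam^2*θ := h1
          _ = (lam*θ)*lam := by ring
          _ ≤ (lam*θ)*μ := mul_le_mul_of_nonneg_left hμlam (by positivity)
          _ = lam*θ*μ := by ring
      have hKθ : lam*θ/K ≤ lam*θ₀/K := by gcongr
      have htμs₀ : t/μ ≤ s₀ := le_trans htμ_le (le_trans hKθ hKs₀)
      have hfmtμ : fm (t/μ) ≤ t := by
        have hT := hTay (t/μ) hsμ0 htμs₀
        have hexp : 1 + θ ≤ Real.exp θ := by linarith [Real.add_one_le_exp θ]
        have h2a : K*(t/μ) ≤ lam*θ := by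
          calc K*(t/μ) ≤ K*(lam*θ/K) := mul_le_mul_of_nonneg_left htμ_le hK0.le
            _ = lam*θ := by field_simp
        have e1 : K₀*(t/μ)^2 ≤ K*(t/μ)^2 := mul_le_mul_of_nonneg_right hKK₀ (sq_nonneg _)
        have e2 : K*(t/μ)^2 = (K*(t/μ))*(t/μ) := by ring
        have e3 : (K*(t/μ))*(t/μ) ≤ (lam*θ)*(t/μ) := mul_le_mul_of_nonneg_right h2a hsμ0
        have h5 : lam*(1+θ)*(t/μ) ≤ lam*Real.exp θ*(t/μ) :=
          mul_le_mul_of_nonneg_right (mul_le_mul_of_nonneg_left hexp hlam0.le) hsμ0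
        have h6 : lam*Real.exp θ*(t/μ) = t := by
          rw [← hμ_def]; field_simp
        have h7 : lam*(t/μ) + (lam*θ)*(t/μ) = lam*(1+θ)*(t/μ) := by ring
        linarith
      have hsf : t/μ ≤ fminv t := hfminv_ge _ _ hfmtμ
      have hmain := hφlb t ht0 htM (t/μ) hsμ0 hsf
      refine le_trans ?_ hmain
      apply mul_le_mul_of_nonneg_left _ (by positivity : (0:ℝ) ≤ c/ε)
      apply hGmono _ _ (by positivity)
      rw [hyr_eq]
      exact div_le_div_of_nonneg_right ht.1 hμ0.le
    have hν1 : ν ≤ 1 := by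
      rw [hν_def]
      exact Real.exp_le_one_iff.mpr (by linarith)
    have hνy_le : ν*y ≤ y := by
      calc ν*y ≤ 1*y := mul_le_mul_of_nonneg_right hν1 hy0.le
        _ = y := one_mul y
    have hsplit2 : G y = (∫ t in (0:ℝ)..(ν*y), φ t) + ∫ t in (ν*y)..y, φ t := by
      simp only [hG_def]
      rw [intervalIntegral.integral_add_adjacent_intervals (hφint _ _) (hφint _ _)]
    have hnn1 : 0 ≤ ∫ t in (0:ℝ)..(ν*y), φ t :=
      intervalIntegral.integral_nonneg (by positivity) (fun u _ => hφnn u)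
    have hmono2 : ((c/ε) * G (y/r)) * (y - ν*y) ≤ ∫ t in (ν*y)..y, φ t := by
      have h1 := intervalIntegral.integral_mono_on (f := fun _ => (c/ε) * G (y/r))
        hνy_le (intervalIntegrable_const) (hφint _ _) hpt
      rw [intervalIntegral.integral_const, smul_eq_mul] at h1
      linarith
    have hG0 : 0 ≤ G (y/r) := hGnonneg _ (by positivity)
    have hν2 : θ/2 ≤ 1 - ν := by
      have hexp : 1 + θ ≤ Real.exp θ := by linarith [Real.add_one_le_exp θ]
      have h1 : ν ≤ 1/(1+θ) := by
        rw [hν_def, Real.exp_neg, one_div]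
        exact inv_anti₀ (by linarith) hexp
      have h2 : (1:ℝ) - 1/(1+θ) = θ/(1+θ) := by
        field_simp
        ring
      have h3 : θ/2 ≤ θ/(1+θ) := by
        gcongr <;> linarith
      linarith
    have hfirst : (c2*θ)*y*G (y/r) ≤ ((c/ε) * G (y/r))*(y - ν*y) := by
      rw [hc2_def]
      have hyν : θ/2*y ≤ y - ν*y := by
        have := mul_le_mul_of_nonneg_right hν2 hy0.le
        calc θ/2*y = θ/2*y := rfl
          _ ≤ (1-ν)*y := this
          _ = y - ν*y := by ring
      have hG2 : (0:ℝ) ≤ (c/ε) * G (y/r) := by positivity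
      calc c/(2*ε)*θ*y*G (y/r) = ((c/ε) * G (y/r))*(θ/2*y) := by ring
        _ ≤ ((c/ε) * G (y/r))*(y - ν*y) := mul_le_mul_of_nonneg_left hyν hG2
    calc (c2*θ)*y*G (y/r) ≤ ((c/ε) * G (y/r))*(y - ν*y) := hfirst
      _ ≤ ∫ t in (ν*y)..y, φ t := hmono2
      _ ≤ G y := by rw [hsplit2]; linarith
  -- anchor constants
  set r₀ : ℝ := lam*Real.exp (2*θ₀) with hr₀_def
  clear_value r₀
  set q₀ : ℝ := l - 2*θ₀ with hq₀_def
  clear_value q₀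
  have hq₀2 : l/2 ≤ q₀ := by rw [hq₀_def]; linarith only [hθ₀l]
  have hq₀0 : 0 < q₀ := by rw [hq₀_def]; linarith only [hθ₀l, hl]
  have hr₀0 : 0 < r₀ := by rw [hr₀_def]; positivity
  have hlogr₀ : Real.log r₀ = -q₀ := by
    rw [hr₀_def, Real.log_mul hlam0.ne' (Real.exp_ne_zero _), Real.log_exp, hlamlog, hq₀_def]
    ring
  have hr₀1 : r₀ < 1 := by
    by_contra h
    push_neg at h
    have := Real.log_nonneg h
    rw [hlogr₀] at this
    linarith only [this, hq₀0]
  set A₀ : ℝ := c₄*θ₀ with hA₀_def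
  clear_value A₀
  have hA₀0 : 0 < A₀ := by rw [hA₀_def]; positivity
  have hA₀M : A₀ ≤ M := hc₄M
  set b₀ : ℝ := c2*θ₀ with hb₀_def
  clear_value b₀
  have hb₀0 : 0 < b₀ := by rw [hb₀_def]; positivity
  set mstar : ℝ := G (A₀*r₀) with hmstar_def
  clear_value mstar
  have hmstar0 : 0 < mstar := by
    rw [hmstar_def]
    apply hGpos _ (by positivity)
    calc A₀*r₀ ≤ A₀*1 := mul_le_mul_of_nonneg_left hr₀1.le hA₀0.le
      _ = A₀ := mul_one _
      _ ≤ x₀' := le_trans hA₀M hMx₀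
  set cA : ℝ := Real.log θ₀ + l with hcA_def
  clear_value cA
  set C : ℝ := 3 + |Real.log c2|/l + 4 * |Real.log c2| /l^2 + 4/l^2 + 2/l^2
      + |Real.log (c/ε)| with hC_def
  have hC0 : 0 < C := by rw [hC_def]; positivity
  refine ⟨C, hC0, ?_⟩
  -- eventual conditions
  have hLten : Tendsto (fun x : ℝ => -Real.log x) (𝓝[>] (0:ℝ)) atTop :=
    tendsto_neg_atBot_atTop.comp Real.tendsto_log_nhdsGT_zero
  have ev1 : ∀ᶠ x : ℝ in 𝓝[>] 0, 3 ≤ -Real.log x := hLten.eventually (eventually_ge_atTop 3)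
  have ev2 : ∀ᶠ x : ℝ in 𝓝[>] 0, Real.exp 1 ≤ -Real.log x :=
    hLten.eventually (eventually_ge_atTop _)
  have ev3 : ∀ᶠ x : ℝ in 𝓝[>] 0, 1/θ₀ ≤ -Real.log x := hLten.eventually (eventually_ge_atTop _)
  have ev4 : ∀ᶠ x : ℝ in 𝓝[>] 0, 4/l ≤ -Real.log x := hLten.eventually (eventually_ge_atTop _)
  have ev5 : ∀ᶠ x : ℝ in 𝓝[>] 0, Real.log (-Real.log x) + (- Real.log c₄) ≤ -Real.log x :=
    hLten.eventually (eventually_log_add_le' _)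
  have ev6 : ∀ᶠ x : ℝ in 𝓝[>] 0, c₄ ≤ -Real.log x := hLten.eventually (eventually_ge_atTop _)
  have ev7 : ∀ᶠ x : ℝ in 𝓝[>] 0, -cA ≤ Real.log (-Real.log x) :=
    hLten.eventually (Real.tendsto_log_atTop.eventually_ge_atTop _)
  have ev8 : ∀ᶠ x : ℝ in 𝓝[>] 0,
      (2/l) * (Real.log (-Real.log x) + |cA|) * (( |Real.log b₀| + |Real.log (lam*c₄)| )
        + Real.log (-Real.log x)) + |Real.log mstar| ≤ -Real.log x :=
    hLten.eventually (eventually_quad_le' l _ _ _ hl)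
  have ev9 : ∀ᶠ x : ℝ in 𝓝[>] 0, x ≤ (1-lam)/K := by
    have h := eventually_lt_nhds (show (0:ℝ) < (1-lam)/K from div_pos (by linarith only [hlam1]) hK0)
    exact (h.filter_mono nhdsWithin_le_nhds).mono (fun x hx => hx.le)
  have ev10 : ∀ᶠ x : ℝ in 𝓝[>] 0, x ≤ s₀ := by
    have h := eventually_lt_nhds hs₀0
    exact (h.filter_mono nhdsWithin_le_nhds).mono (fun x hx => hx.le)
  have hQ : ∀ᶠ x : ℝ in 𝓝[>] (0:ℝ),
      Real.log (φ x) ≥ (1 / (2 * Real.log lam)) * (Real.log x) ^ 2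
        - (1 / Real.log lam) * Real.log x * Real.log (Real.log (1/x)) - C * |Real.log x| := by
    filter_upwards [self_mem_nhdsWithin, ev1, ev2, ev3, ev4, ev5, ev6, ev7, ev8, ev9, ev10]
      with x hx0' hev1 hev2 hev3 hev4 hev5 hev6 hev7 hev8 hev9 hev10
    have hx0 : 0 < x := hx0'
    set L : ℝ := -Real.log x with hL_def
    clear_value L
    have hL3 : 3 ≤ L := hev1
    have hL0 : 0 < L := by linarith only [hL3]
    have hlogx : Real.log x = -L := by rw [hL_def]; ring
    have hlogL1 : 1 ≤ Real.log L := by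
      have h := Real.log_le_log (Real.exp_pos 1) hev2
      rwa [Real.log_exp] at h
    have hlogL0 : 0 ≤ Real.log L := by linarith only [hlogL1]
    have hlogLL : Real.log L ≤ L := by linarith only [Real.log_le_sub_one_of_pos hL0]
    set θ : ℝ := 1/L with hθ_def
    clear_value θ
    have hθ0 : 0 < θ := by rw [hθ_def]; positivity
    have hθθ₀ : θ ≤ θ₀ := by
      rw [hθ_def, div_le_iff₀ hL0]
      rw [div_le_iff₀ hθ₀0] at hev3
      linarith only [hev3]
    set q : ℝ := l - 2*θ with hq_def
    clear_value q
    have hq_alt : q = l - 2/L := by rw [hq_def, hθ_def]; ring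
    have hq2 : l/2 ≤ q := by
      rw [hq_def]
      have hθl4 : θ ≤ l/4 := le_trans hθθ₀ hθ₀l
      linarith only [hθl4]
    have hq0 : 0 < q := by linarith only [hq2, hl]
    have hqll : q ≤ l := by rw [hq_def]; linarith only [hθ0]
    set r : ℝ := lam*Real.exp (2*θ) with hr_def
    clear_value r
    have hr0 : 0 < r := by rw [hr_def]; positivity
    have hlogr : Real.log r = -q := by
      rw [hr_def, Real.log_mul hlam0.ne' (Real.exp_ne_zero _), Real.log_exp, hlamlog, hq_def]
      ring
    have hr1 : r < 1 := by
      by_contra h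
      push_neg at h
      have := Real.log_nonneg h
      rw [hlogr] at this
      linarith only [this, hq0]
    set A : ℝ := c₄*θ with hA_def
    clear_value A
    have hA0 : 0 < A := by rw [hA_def]; positivity
    have hlogθ : Real.log θ = -Real.log L := by
      rw [hθ_def, one_div, Real.log_inv]
    have hlogA : Real.log A = Real.log c₄ - Real.log L := by
      rw [hA_def, Real.log_mul hc₄0.ne' hθ0.ne', hlogθ]
      ring
    set D : ℝ := Real.log A + L with hD_def
    clear_value D
    have hD0 : 0 ≤ D := by
      rw [hD_def, hlogA]
      linarith only [hev5]
    have hDL : D ≤ L := by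
      rw [hD_def, hlogA]
      have h := Real.log_le_log hc₄0 hev6
      linarith only [h]
    set n : ℕ := ⌊D/q⌋₊ with hn_def
    clear_value n
    have hn1 : q*(n:ℝ) ≤ D := by
      have h := Nat.floor_le (div_nonneg hD0 hq0.le)
      rw [hn_def]
      calc q*((⌊D/q⌋₊ : ℕ):ℝ) ≤ q*(D/q) := mul_le_mul_of_nonneg_left h hq0.le
        _ = D := by field_simp
    have hn2 : D < q*((n:ℝ)+1) := by
      have h := Nat.lt_floor_add_one (D/q)
      rw [hn_def]
      calc D = (D/q)*q := by field_simp
        _ < (((⌊D/q⌋₊ : ℕ):ℝ)+1)*q := mul_lt_mul_of_pos_right h hq0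
        _ = q*(((⌊D/q⌋₊ : ℕ):ℝ)+1) := by ring
    have hxA : x ≤ A*r^n := by
      have h1 : Real.log x ≤ Real.log A + (n:ℝ)*Real.log r := by
        rw [hlogx, hlogr]
        have h2 : q*(n:ℝ) ≤ Real.log A + L := by rw [← hD_def]; exact hn1
        linarith only [h2]
      calc x = Real.exp (Real.log x) := (Real.exp_log hx0).symm
        _ ≤ Real.exp (Real.log A + (n:ℝ)*Real.log r) := Real.exp_le_exp.mpr h1
        _ = A*r^n := by
            rw [Real.exp_add, Real.exp_log hA0, Real.exp_nat_mul, Real.exp_log hr0]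
    have hAM : A ≤ M := le_trans
      (show A ≤ A₀ by rw [hA_def, hA₀_def]; exact mul_le_mul_of_nonneg_left hθθ₀ hc₄0.le) hc₄M
    have hGposA : ∀ z : ℝ, 0 < z → z ≤ A → 0 < G z := fun z hz hzA =>
      hGpos z hz (le_trans hzA (le_trans hAM hMx₀))
    have hstepA : ∀ z : ℝ, 0 < z → z ≤ A → (c2*θ)*z*G (z/r) ≤ G z := by
      intro z hz hzA
      rw [hA_def] at hzA
      rw [hr_def]
      exact hstep θ hθ0 hθθ₀ z hz hzA
    have hchain := chain_lemma' G (c2*θ) r A hr0 hr1 (by positivity) hGposA hstepA n x hx0 hxA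
    set y₁ : ℝ := lam*c₄*θ with hy₁_def
    clear_value y₁
    have hy₁0 : 0 < y₁ := by rw [hy₁_def]; positivity
    have hlogy₁ : Real.log y₁ = Real.log (lam*c₄) - Real.log L := by
      rw [hy₁_def, show lam*c₄*θ = (lam*c₄)*θ by ring,
        Real.log_mul (by positivity) hθ0.ne', hlogθ]
      ring
    have hy₁A : y₁ ≤ A := by
      rw [hy₁_def, hA_def]
      have h1 : lam*c₄ ≤ c₄ := by
        calc lam*c₄ ≤ 1*c₄ := mul_le_mul_of_nonneg_right hlam1.le hc₄0.le
          _ = c₄ := one_mul _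
      calc lam*c₄*θ = (lam*c₄)*θ := by ring
        _ ≤ c₄*θ := mul_le_mul_of_nonneg_right h1 hθ0.le
    have hy₁x₀ : y₁ ≤ x₀' := le_trans hy₁A (le_trans hAM hMx₀)
    have htopy₁ : y₁ ≤ x/r^n := by
      have h3 : Real.log (lam*c₄) = Real.log c₄ - l := by
        rw [Real.log_mul hlam0.ne' hc₄0.ne', hlamlog]
        ring
      have h1 : Real.log y₁ ≤ Real.log x - (n:ℝ)*Real.log r := by
        rw [hlogy₁, hlogx, hlogr, h3]
        have h2 : Real.log A + L - q < q*(n:ℝ) := by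
          rw [← hD_def]
          linarith [hn2]
        rw [hlogA] at h2
        linarith only [h2, hqll]
      calc y₁ = Real.exp (Real.log y₁) := (Real.exp_log hy₁0).symm
        _ ≤ Real.exp (Real.log x - (n:ℝ)*Real.log r) := Real.exp_le_exp.mpr h1
        _ = x/r^n := by
            rw [Real.exp_sub, Real.exp_log hx0, Real.exp_nat_mul, Real.exp_log hr0]
    have hGy₁0 : 0 < G y₁ := hGpos _ hy₁0 hy₁x₀
    have hGtop : Real.log (G y₁) ≤ Real.log (G (x/r^n)) :=
      Real.log_le_log hGy₁0 (hGmono _ _ hy₁0.le htopy₁)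
    -- anchor chain
    set D₁ : ℝ := Real.log L + cA with hD₁_def
    clear_value D₁
    have hD₁0 : 0 ≤ D₁ := by
      rw [hD₁_def]
      linarith only [hev7]
    set n₁ : ℕ := ⌊D₁/q₀⌋₊ with hn₁_def
    clear_value n₁
    have hn₁1 : q₀*(n₁:ℝ) ≤ D₁ := by
      have h := Nat.floor_le (div_nonneg hD₁0 hq₀0.le)
      rw [hn₁_def]
      calc q₀*((⌊D₁/q₀⌋₊ : ℕ):ℝ) ≤ q₀*(D₁/q₀) := mul_le_mul_of_nonneg_left h hq₀0.le
        _ = D₁ := by field_simp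
    have hn₁2 : D₁ < q₀*((n₁:ℝ)+1) := by
      have h := Nat.lt_floor_add_one (D₁/q₀)
      rw [hn₁_def]
      calc D₁ = (D₁/q₀)*q₀ := by field_simp
        _ < (((⌊D₁/q₀⌋₊ : ℕ):ℝ)+1)*q₀ := mul_lt_mul_of_pos_right h hq₀0
        _ = q₀*(((⌊D₁/q₀⌋₊ : ℕ):ℝ)+1) := by ring
    have hlogA₀ : Real.log A₀ = Real.log c₄ + Real.log θ₀ := by
      rw [hA₀_def, Real.log_mul hc₄0.ne' hθ₀0.ne']
    have hDiff : Real.log A₀ - Real.log y₁ = D₁ := by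
      rw [hlogA₀, hlogy₁, hD₁_def, hcA_def, Real.log_mul hlam0.ne' hc₄0.ne', hlamlog]
      ring
    have hy₁A₀ : y₁ ≤ A₀*r₀^n₁ := by
      have h1 : Real.log y₁ ≤ Real.log A₀ + (n₁:ℝ)*Real.log r₀ := by
        rw [hlogr₀]
        linarith only [hn₁1, hDiff]
      calc y₁ = Real.exp (Real.log y₁) := (Real.exp_log hy₁0).symm
        _ ≤ Real.exp (Real.log A₀ + (n₁:ℝ)*Real.log r₀) := Real.exp_le_exp.mpr h1
        _ = A₀*r₀^n₁ := by
            rw [Real.exp_add, Real.exp_log hA₀0, Real.exp_nat_mul, Real.exp_log hr₀0]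
    have hGposA₀ : ∀ z : ℝ, 0 < z → z ≤ A₀ → 0 < G z := fun z hz hzA =>
      hGpos z hz (le_trans hzA (le_trans hA₀M hMx₀))
    have hstepA₀ : ∀ z : ℝ, 0 < z → z ≤ A₀ → b₀*z*G (z/r₀) ≤ G z := by
      intro z hz hzA
      rw [hA₀_def] at hzA
      rw [hb₀_def, hr₀_def]
      exact hstep θ₀ hθ₀0 le_rfl z hz hzA
    have hchain₁ := chain_lemma' G b₀ r₀ A₀ hr₀0 hr₀1 hb₀0 hGposA₀ hstepA₀ n₁ y₁ hy₁0 hy₁A₀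
    have htop₁ : A₀*r₀ ≤ y₁/r₀^n₁ := by
      have h1 : Real.log (A₀*r₀) ≤ Real.log y₁ - (n₁:ℝ)*Real.log r₀ := by
        rw [Real.log_mul hA₀0.ne' hr₀0.ne', hlogr₀]
        linarith only [hn₁2, hDiff]
      calc A₀*r₀ = Real.exp (Real.log (A₀*r₀)) := (Real.exp_log (by positivity)).symm
        _ ≤ Real.exp (Real.log y₁ - (n₁:ℝ)*Real.log r₀) := Real.exp_le_exp.mpr h1
        _ = y₁/r₀^n₁ := by
            rw [Real.exp_sub, Real.exp_log hy₁0, Real.exp_nat_mul, Real.exp_log hr₀0]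
    have hGmstarle : mstar ≤ G (y₁/r₀^n₁) := by
      rw [hmstar_def]
      exact hGmono _ _ (by positivity) htop₁
    have hGmstar : Real.log mstar ≤ Real.log (G (y₁/r₀^n₁)) :=
      Real.log_le_log hmstar0 hGmstarle
    have hanchor : -L ≤ Real.log (G y₁) := by
      have h1 := hchain₁
      rw [hlogr₀] at h1
      simp only [neg_neg] at h1
      have h2 := anchor_calc' l q₀ (n₁:ℝ) cA (Real.log b₀) (Real.log (lam*c₄))
        (Real.log mstar) (Real.log L) L hl hq₀2 (Nat.cast_nonneg n₁)
        (nat_mul_sub_one_nonneg' n₁) hlogL0 (by rw [← hD₁_def]; exact hn₁1) hev8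
      rw [← hlogy₁] at h2
      linarith only [h1, h2, hGmstar]
    -- main chain estimate
    have hlogb : Real.log (c2*θ) = Real.log c2 - Real.log L := by
      rw [Real.log_mul hc20.ne' hθ0.ne', hlogθ]
      ring
    have hmainG : (n:ℝ)*(Real.log c2 - Real.log L) + (n:ℝ)*(-L)
        + ((n:ℝ)*((n:ℝ)-1)/2)*q + (-L) ≤ Real.log (G x) := by
      have h1 := hchain
      rw [hlogr] at h1
      simp only [neg_neg] at h1
      rw [hlogb, hlogx] at h1
      linarith only [h1, hGtop, hanchor]
    -- φ vs G
    have hxM : x ≤ M := by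
      have h1 : x ≤ A := by
        calc x = Real.exp (Real.log x) := (Real.exp_log hx0).symm
          _ ≤ Real.exp (Real.log A) := Real.exp_le_exp.mpr (by rw [hlogx]; rw [hD_def] at hD0; linarith only [hD0])
          _ = A := Real.exp_log hA0
      exact le_trans h1 hAM
    have hfmx : fm x ≤ x := by
      have hT := hTay x hx0.le hev10
      have h5 : x*K ≤ 1-lam := (le_div_iff₀ hK0).mp hev9
      have h6 : K₀*x^2 ≤ (1-lam)*x := by
        have h7 : K₀*x ≤ K*x := mul_le_mul_of_nonneg_right hKK₀ hx0.le
        have h8 : (K₀*x)*x ≤ (K*x)*x := mul_le_mul_of_nonneg_right h7 hx0.le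
        have h9 : (K*x)*x ≤ (1-lam)*x := mul_le_mul_of_nonneg_right (by linarith only [h5]) hx0.le
        calc K₀*x^2 = (K₀*x)*x := by ring
          _ ≤ (K*x)*x := h8
          _ ≤ (1-lam)*x := h9
      linarith only [hT, h6]
    have hxfminv : x ≤ fminv x := hfminv_ge x x hfmx
    have hφG := hφlb x hx0 hxM x hx0.le hxfminv
    have hGx0 : 0 < G x := hGpos x hx0 (le_trans hxM hMx₀)
    have hlogφ : Real.log (c/ε) + Real.log (G x) ≤ Real.log (φ x) := by
      have h1 : (0:ℝ) < (c/ε)*G x := by positivity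
      have h2 := Real.log_le_log h1 hφG
      rwa [Real.log_mul (by positivity) hGx0.ne'] at h2
    have hcalc := main_calc' l L q D (n:ℝ) (Real.log c2) (Real.log (c/ε)) hl hL3 hlogL1
      hlogLL hq_alt hq2 (Nat.cast_nonneg n) hn1 hDL
    have hlog1x : Real.log (1/x) = L := by
      rw [one_div, Real.log_inv, hlogx]
      ring
    have key : -(L^2/(2*l)) - L*Real.log L/l - C*L ≤ Real.log (φ x) := by
      rw [hC_def]
      linarith only [hcalc, hmainG, hlogφ]
    rw [ge_iff_le]
    calc (1 / (2 * Real.log lam)) * (Real.log x) ^ 2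
          - (1 / Real.log lam) * Real.log x * Real.log (Real.log (1/x)) - C * |Real.log x|
        = -(L^2/(2*l)) - L*Real.log L/l - C*L := by
          rw [hlamlog, hlogx, hlog1x, abs_neg, abs_of_pos hL0]
          field_simp
      _ ≤ Real.log (φ x) := key
  obtain ⟨u, hu, hsub⟩ := mem_nhdsGT_iff_exists_Ioo_subset.mp hQ
  have hu0 : 0 < u := hu
  refine ⟨min u x₀'/2, ⟨by positivity, ?_⟩, ?_⟩
  · have h1 : min u x₀' ≤ x₀' := min_le_right u x₀'
    linarith only [h1, hx₀']
  · intro x hx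
    have hxu : x < u := by
      have h1 : min u x₀' ≤ u := min_le_left u x₀'
      linarith only [h1, hx.2, hu0]
    exact hsub ⟨hx.1, hxu⟩
end
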